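/- Let n ≥ 1, let s_S and s_W be disjoint subsets of {1,…,n}, and let n_N, n_E be nonnegative integers with n_N + n_E = |s_S| + |s_W|. Then, for all elements x and t of a commutative ring, the sum, over all pairs (s_N, s_E) of disjoint subsets of {1,…,n} with s_N ∪ s_E = s_S ∪ s_W, |s_N| = n_N and |s_E| = n_E, of x^{n_E} · t^{d(s_N,s_E)}, equals x^{n_E} · Σ_{S ⊆ {0,1,…,n_N+n_E−1}, |S| = n_E} t^{Σ_{s∈S} s}. In other words, the colorblind vertex weight equals the sum of the colored vertex weights over all admissible outgoing colorings. -/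

import Mathlib

/-!
An admissible outgoing coloring is determined by its east part `s_E`, an `n_E`-subset of
`u = s_S ∪ s_W`, the north part being `u \ s_E`. Counting the pairs in `d(s_N, s_E)` by their
first entry gives `d(s_N, s_E) = ∑_{i ∈ s_E} #{j ∈ u | i < j}`, and this rank
`i ↦ #{j ∈ u | i < j}` is an order-reversing bijection from `u` onto `{0, …, |u| - 1}`. It
therefore carries the `n_E`-subsets of `u` bijectively to those of `{0, …, n_N + n_E - 1}`,
matching the two sums term by term.
-/

open Finset

def dNE {n : ℕ} (sN sE : Finset (Fin n)) : ℕ :=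
  (Finset.univ.filter fun p : Fin n × Fin n => p.1 < p.2 ∧ p.1 ∈ sE ∧ p.2 ∈ sN ∪ sE).card

def upperRank {α : Type*} [LinearOrder α] (u : Finset α) (i : α) : ℕ := #{j ∈ u | i < j}

section UpperRank

variable {α : Type*} [LinearOrder α] (u : Finset α)

theorem upperRank_lt_card {i : α} (hi : i ∈ u) : upperRank u i < #u :=
  card_lt_card <| filter_ssubset.2 ⟨i, hi, lt_irrefl i⟩

theorem strictAntiOn_upperRank : StrictAntiOn (upperRank u) u := by
  intro a _ b hb hab
  refine card_lt_card <| (ssubset_iff_of_subset ?_).2 ⟨b, ?_, ?_⟩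
  · exact monotone_filter_right _ fun j _ hj => hab.trans hj
  · simpa [hab] using hb
  · simp

theorem image_upperRank : u.image (upperRank u) = range #u :=
  eq_of_subset_of_card_le
    (fun _ hs => by
      obtain ⟨i, hi, rfl⟩ := mem_image.1 hs
      exact mem_range.2 (upperRank_lt_card u hi))
    (by rw [card_range, card_image_of_injOn (strictAntiOn_upperRank u).injOn])

end UpperRank

theorem sum_powersetCard_image {α β M : Type*} [DecidableEq α] [DecidableEq β] [AddCommMonoid M]
    {f : α → β} {u : Finset α} (hf : Set.InjOn f u) (k : ℕ) (g : Finset β → M) :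
    ∑ T ∈ (u.image f).powersetCard k, g T = ∑ S ∈ u.powersetCard k, g (S.image f) := by
  have himage {T : Finset β} (hT : T ⊆ u.image f) : {i ∈ u | f i ∈ T}.image f = T := by
    ext b
    constructor
    · simp only [mem_image, mem_filter]
      rintro ⟨a, ⟨-, ha⟩, rfl⟩
      exact ha
    · intro hb
      obtain ⟨a, ha, rfl⟩ := mem_image.1 (hT hb)
      exact mem_image_of_mem f (by simp [ha, hb])
  refine sum_nbij' (fun T => {i ∈ u | f i ∈ T}) (image f) ?_ ?_ ?_ ?_ ?_
  all_goals simp only [mem_powersetCard]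
  · rintro T ⟨hT, rfl⟩
    refine ⟨filter_subset _ _, ?_⟩
    conv_rhs => rw [← himage hT]
    exact (card_image_of_injOn (hf.mono (filter_subset _ _))).symm
  · rintro S ⟨hS, rfl⟩
    exact ⟨image_subset_image hS, card_image_of_injOn (hf.mono hS)⟩
  · exact fun T ⟨hT, _⟩ => himage hT
  · rintro S ⟨hS, -⟩
    ext a
    simp only [mem_filter, mem_image]
    constructor
    · rintro ⟨ha, b, hb, hba⟩
      rwa [← hf (hS hb) ha hba]
    · exact fun ha => ⟨hS ha, a, ha, rfl⟩
  · exact fun T ⟨hT, _⟩ => by rw [himage hT]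

theorem sum_filter_partition_eq_sum_powersetCard {α M : Type*} [Fintype α] [DecidableEq α]
    [AddCommMonoid M] (u : Finset α) {nN nE : ℕ} (hu : nN + nE = #u)
    (f : Finset α → Finset α → M) :
    ∑ p ∈ (univ : Finset (Finset α × Finset α)).filter
        (fun p => p.1 ∩ p.2 = ∅ ∧ p.1 ∪ p.2 = u ∧ #p.1 = nN ∧ #p.2 = nE), f p.1 p.2 =
      ∑ s ∈ u.powersetCard nE, f (u \ s) s := by
  refine sum_nbij' Prod.snd (fun s => (u \ s, s)) ?_ ?_ ?_ (fun _ _ => rfl) ?_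
  all_goals simp only [mem_filter, mem_univ, true_and, mem_powersetCard]
  · rintro ⟨sN, sE⟩ ⟨-, rfl, -, rfl⟩
    exact ⟨subset_union_right, rfl⟩
  · rintro s ⟨hs, rfl⟩
    refine ⟨sdiff_inter_self _ _, sdiff_union_of_subset hs, ?_, rfl⟩
    rw [card_sdiff_of_subset hs]
    omega
  · rintro ⟨sN, sE⟩ ⟨hdisj, rfl, -⟩
    rw [union_sdiff_cancel_right (disjoint_iff_inter_eq_empty.2 hdisj)]
  · rintro ⟨sN, sE⟩ ⟨hdisj, rfl, -⟩
    rw [union_sdiff_cancel_right (disjoint_iff_inter_eq_empty.2 hdisj)]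

theorem dNE_eq_sum_upperRank {n : ℕ} (sN sE : Finset (Fin n)) :
    dNE sN sE = ∑ i ∈ sE, upperRank (sN ∪ sE) i := by
  have : ({p : Fin n × Fin n | p.1 < p.2 ∧ p.1 ∈ sE ∧ p.2 ∈ sN ∪ sE} : Finset _) =
      {p ∈ sE ×ˢ (sN ∪ sE) | p.1 < p.2} := by
    ext
    simp only [mem_filter, mem_univ, true_and, mem_product]
    tauto
  simp only [dNE, upperRank, this, card_filter, sum_product]

theorem colorblind_weight_eq_sum_colored {R : Type*} [CommRing R] (n : ℕ)
    (x t : R) (sS sW : Finset (Fin n)) (hdisj : sS ∩ sW = ∅)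
    (nN nE : ℕ) (hsum : nN + nE = sS.card + sW.card) :
    ∑ p ∈ (Finset.univ : Finset (Finset (Fin n) × Finset (Fin n))).filter
        (fun p => p.1 ∩ p.2 = ∅ ∧ p.1 ∪ p.2 = sS ∪ sW ∧ p.1.card = nN ∧ p.2.card = nE),
      x ^ nE * t ^ dNE p.1 p.2 =
    x ^ nE * ∑ S ∈ (Finset.range (nN + nE)).powersetCard nE, t ^ (∑ s ∈ S, s) := by
  set u := sS ∪ sW
  have hu : nN + nE = #u := by
    rw [hsum, card_union_of_disjoint (disjoint_iff_inter_eq_empty.2 hdisj)]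
  have hinj := (strictAntiOn_upperRank u).injOn
  rw [sum_filter_partition_eq_sum_powersetCard u hu fun sN sE => x ^ nE * t ^ dNE sN sE, hu,
    ← image_upperRank, sum_powersetCard_image hinj, mul_sum]
  refine sum_congr rfl fun s hs => ?_
  have hsu := (mem_powersetCard.1 hs).1
  rw [dNE_eq_sum_upperRank, sdiff_union_of_subset hsu, sum_image (hinj.mono hsu)]
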